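/- arXiv:q-alg/9608005 — 5 statements merged into one kernel-verified Lean document; each statement's English description precedes it below -/
import Mathlib

section
/- Let k₀ be a finite-dimensional Frobenius ℂ-algebra with pairing ⟨a,b⟩ = θ(ab), R₀ a maximal isotropic subalgebra, with dual bases (e^i) of R₀ and (e_i) of a complement Λ₀ of R₀ in k₀, and set a₀ = Σ_i e^i ⊗ e_i. Then for any α ∈ R₀, the element γ(α) := (α ⊗ 1 − 1 ⊗ α)·a₀ belongs to R₀ ⊗ R₀. -/
/- STATEMENT 2: Let `k₀` be a finite-dimensional Frobenius ℂ-algebra with pairing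
`⟨a,b⟩ = θ(ab)`, `R₀` a maximal isotropic subalgebra, with dual bases `(eR i)` of `R₀`
and `(eΛ i)` of an isotropic complement `Λ₀`, and `a₀ = Σ_i eR i ⊗ eΛ i`.  Then for any
`α ∈ R₀`, the element `γ(α) = (α⊗1 − 1⊗α)·a₀` belongs to `R₀ ⊗ R₀`. -/

noncomputable section

open TensorProduct

theorem stmt2 {k₀ : Type*} [CommRing k₀] [Algebra ℂ k₀] [FiniteDimensional ℂ k₀]
    (θ : k₀ →ₗ[ℂ] ℂ)
    (hnd : ∀ a : k₀, (∀ b : k₀, θ (a * b) = 0) → a = 0)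
    (R₀ : Subalgebra ℂ k₀) (Λ₀ : Submodule ℂ k₀)
    -- R₀ is maximal isotropic
    (hisoR : ∀ a ∈ R₀, ∀ b ∈ R₀, θ (a * b) = 0)
    (hmaxR : ∀ a : k₀, (∀ b ∈ R₀, θ (a * b) = 0) → a ∈ R₀)
    -- Λ₀ is an isotropic complement of R₀
    (hisoΛ : ∀ a ∈ Λ₀, ∀ b ∈ Λ₀, θ (a * b) = 0)
    (hcompl : IsCompl R₀.toSubmodule Λ₀)
    -- dual bases of R₀ and Λ₀
    (n : ℕ) (eR eΛ : Fin n → k₀)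
    (heR : ∀ i, eR i ∈ R₀) (heΛ : ∀ i, eΛ i ∈ Λ₀)
    (hspanR : Submodule.span ℂ (Set.range eR) = R₀.toSubmodule)
    (hspanΛ : Submodule.span ℂ (Set.range eΛ) = Λ₀)
    (hindR : LinearIndependent ℂ eR) (hindΛ : LinearIndependent ℂ eΛ)
    (hdual : ∀ i j, θ (eR i * eΛ j) = if i = j then 1 else 0) :
    ∀ α ∈ R₀,
      (α ⊗ₜ[ℂ] (1 : k₀) - (1 : k₀) ⊗ₜ[ℂ] α) * (∑ i, eR i ⊗ₜ[ℂ] eΛ i)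
        ∈ LinearMap.range
            (TensorProduct.map (R₀.toSubmodule.subtype) (R₀.toSubmodule.subtype)) := by
  intro α hα
  -- decomposition lemma
  have decomp : ∀ x : k₀,
      x = (∑ j, θ (eΛ j * x) • eR j) + (∑ j, θ (eR j * x) • eΛ j) := by
    intro x
    set y := x - ((∑ j, θ (eΛ j * x) • eR j) + (∑ j, θ (eR j * x) • eΛ j)) with hy
    have hyb : ∀ b : k₀, θ (y * b) = 0 := by
      set f : k₀ →ₗ[ℂ] ℂ := θ.comp (LinearMap.mulLeft ℂ y) with hf
      have hfR : ∀ k, f (eR k) = 0 := by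
        intro k
        have h1 : ∀ j, θ ((θ (eΛ j * x) • eR j) * eR k) = 0 := by
          intro j
          rw [smul_mul_assoc, map_smul]
          simp [hisoR _ (heR j) _ (heR k)]
        have h2 : ∀ j, θ ((θ (eR j * x) • eΛ j) * eR k)
            = θ (eR j * x) * (if k = j then 1 else 0) := by
          intro j
          rw [smul_mul_assoc, map_smul, mul_comm (eΛ j) (eR k), hdual k j]
          simp
        simp only [hf, LinearMap.comp_apply, LinearMap.mulLeft_apply, hy,
          sub_mul, add_mul, Finset.sum_mul, map_sub, map_add, map_sum, h1, h2]
        simp [Finset.sum_ite_eq, mul_comm]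
      have hfΛ : ∀ k, f (eΛ k) = 0 := by
        intro k
        have h1 : ∀ j, θ ((θ (eΛ j * x) • eR j) * eΛ k)
            = θ (eΛ j * x) * (if j = k then 1 else 0) := by
          intro j
          rw [smul_mul_assoc, map_smul, hdual j k, smul_eq_mul]
        have h2 : ∀ j, θ ((θ (eR j * x) • eΛ j) * eΛ k) = 0 := by
          intro j
          rw [smul_mul_assoc, map_smul]
          simp [hisoΛ _ (heΛ j) _ (heΛ k)]
        simp only [hf, LinearMap.comp_apply, LinearMap.mulLeft_apply, hy,
          sub_mul, add_mul, Finset.sum_mul, map_sub, map_add, map_sum, h1, h2]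
        simp [Finset.sum_ite_eq', mul_comm, smul_eq_mul]
      intro b
      have hb : b ∈ LinearMap.ker f := by
        have htop : R₀.toSubmodule ⊔ Λ₀ = ⊤ := hcompl.sup_eq_top
        have hRker : R₀.toSubmodule ≤ LinearMap.ker f := by
          rw [← hspanR, Submodule.span_le]
          rintro _ ⟨k, rfl⟩; exact hfR k
        have hΛker : Λ₀ ≤ LinearMap.ker f := by
          rw [← hspanΛ, Submodule.span_le]
          rintro _ ⟨k, rfl⟩; exact hfΛ k
        have : (⊤ : Submodule ℂ k₀) ≤ LinearMap.ker f := by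
          rw [← htop]; exact sup_le hRker hΛker
        exact this trivial
      simpa [hf] using hb
    have hy0 : y = 0 := hnd y hyb
    exact (sub_eq_zero.mp hy0)
  -- decomposition for elements of R₀
  have decompR : ∀ x ∈ R₀, x = ∑ j, θ (eΛ j * x) • eR j := by
    intro x hx
    have h := decomp x
    have h2 : (∑ j, θ (eR j * x) • eΛ j) = 0 := by
      apply Finset.sum_eq_zero
      intro j _
      rw [hisoR _ (heR j) _ hx, zero_smul]
    rw [h2, add_zero] at h
    exact h
  -- key identity
  have key : (α ⊗ₜ[ℂ] (1 : k₀) - (1 : k₀) ⊗ₜ[ℂ] α) * (∑ i, eR i ⊗ₜ[ℂ] eΛ i)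
      = - ∑ i, ∑ j, θ (eΛ j * (α * eΛ i)) • (eR i ⊗ₜ[ℂ] eR j) := by
    rw [sub_mul, Finset.mul_sum, Finset.mul_sum]
    have t1 : ∀ i, (α ⊗ₜ[ℂ] (1 : k₀)) * (eR i ⊗ₜ[ℂ] eΛ i)
        = ∑ j, θ (eΛ j * (α * eR i)) • (eR j ⊗ₜ[ℂ] eΛ i) := by
      intro i
      rw [Algebra.TensorProduct.tmul_mul_tmul, one_mul]
      conv_lhs => rw [decompR (α * eR i) (R₀.mul_mem hα (heR i))]
      rw [TensorProduct.sum_tmul]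
      exact Finset.sum_congr rfl (fun j _ => by rw [TensorProduct.smul_tmul'])
    have t2 : ∀ i, ((1 : k₀) ⊗ₜ[ℂ] α) * (eR i ⊗ₜ[ℂ] eΛ i)
        = (∑ j, θ (eΛ j * (α * eΛ i)) • (eR i ⊗ₜ[ℂ] eR j))
          + ∑ j, θ (eR j * (α * eΛ i)) • (eR i ⊗ₜ[ℂ] eΛ j) := by
      intro i
      rw [Algebra.TensorProduct.tmul_mul_tmul, one_mul]
      conv_lhs => rw [decomp (α * eΛ i)]
      rw [TensorProduct.tmul_add, TensorProduct.tmul_sum, TensorProduct.tmul_sum]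
      congr 1 <;> exact Finset.sum_congr rfl (fun j _ => by rw [TensorProduct.tmul_smul])
    simp only [t1, t2]
    have swap : (∑ i, ∑ j, θ (eΛ j * (α * eR i)) • (eR j ⊗ₜ[ℂ] eΛ i))
        = ∑ i, ∑ j, θ (eR j * (α * eΛ i)) • (eR i ⊗ₜ[ℂ] eΛ j) := by
      rw [Finset.sum_comm]
      refine Finset.sum_congr rfl (fun i _ => Finset.sum_congr rfl (fun j _ => ?_))
      congr 1
      congr 1
      ring
    rw [swap]
    rw [Finset.sum_add_distrib]
    abel
  rw [key]
  refine neg_mem (Submodule.sum_mem _ (fun i _ => Submodule.sum_mem _ (fun j _ => ?_)))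
  refine Submodule.smul_mem _ _ ?_
  exact ⟨(⟨eR i, heR i⟩ : R₀.toSubmodule) ⊗ₜ[ℂ] (⟨eR j, heR j⟩ : R₀.toSubmodule), rfl⟩

end
end

section
/- Let (H, Δ) be a Hopf algebra (in a suitable complete/topological sense) with invertible twists F and 𝓚 and R-matrices 𝓡 = 𝓚F and 𝓡̄ = F^{21}𝓚 such that: (i) 𝓡̄ satisfies the quasi-triangularity cocycle 𝓡̄^{12}(Δ̄⊗1)(𝓡̄) = 𝓡̄^{23}(1⊗Δ̄)(𝓡̄) where Δ̄ = Ad(F)∘Δ; (ii) 𝓚 satisfies 𝓚^{12}(Δ̄⊗1)(𝓚) = 𝓚^{23}(1⊗Δ̄)(𝓚); and (iii) Ad(𝓚)∘Δ̄ = Δ' (the opposite coproduct of Δ). Then F satisfies the cocycle identity F^{12}(Δ⊗1)(F) = F^{23}(1⊗Δ)(F). -/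
/- STATEMENT 14: Let `(H, Δ)` be a Hopf algebra with invertible twists `F` and `𝓚` and
R-matrices `𝓡 = 𝓚F`, `𝓡̄ = F^{21}𝓚` such that:
 (i) `𝓡̄` satisfies the quasi-triangularity cocycle
     `𝓡̄^{12}(Δ̄⊗1)(𝓡̄) = 𝓡̄^{23}(1⊗Δ̄)(𝓡̄)`, where `Δ̄ = Ad(F)∘Δ`;
 (ii) `𝓚^{12}(Δ̄⊗1)(𝓚) = 𝓚^{23}(1⊗Δ̄)(𝓚)`;
 (iii) `Ad(𝓚)∘Δ̄ = Δ'` (the opposite coproduct).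
Then `F` satisfies the cocycle identity `F^{12}(Δ⊗1)(F) = F^{23}(1⊗Δ)(F)`.

Here `(Δ̄⊗1)(X) = F^{12}·(Δ⊗1)(X)·(F^{12})⁻¹` and
`(1⊗Δ̄)(X) = F^{23}·(1⊗Δ)(X)·(F^{23})⁻¹`. -/

open TensorProduct

noncomputable section

variable (H : Type*) [Ring H] [Algebra ℂ H]

/-- `x ⊗ y ↦ x ⊗ (y ⊗ 1)` -/
def leg12 : H ⊗[ℂ] H →ₐ[ℂ] H ⊗[ℂ] (H ⊗[ℂ] H) :=
  Algebra.TensorProduct.map (AlgHom.id ℂ H) Algebra.TensorProduct.includeLeft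

/-- `x ⊗ y ↦ 1 ⊗ (x ⊗ y)` -/
def leg23 : H ⊗[ℂ] H →ₐ[ℂ] H ⊗[ℂ] (H ⊗[ℂ] H) :=
  Algebra.TensorProduct.includeRight

/-- `Δ ⊗ 1`, landing in `H ⊗ (H ⊗ H)` -/
def coprod1 (Δb : H →ₐ[ℂ] H ⊗[ℂ] H) : H ⊗[ℂ] H →ₐ[ℂ] H ⊗[ℂ] (H ⊗[ℂ] H) :=
  (Algebra.TensorProduct.assoc ℂ ℂ ℂ H H H).toAlgHom.comp
    (Algebra.TensorProduct.map Δb (AlgHom.id ℂ H))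

/-- `1 ⊗ Δ` -/
def coprod2 (Δb : H →ₐ[ℂ] H ⊗[ℂ] H) : H ⊗[ℂ] H →ₐ[ℂ] H ⊗[ℂ] (H ⊗[ℂ] H) :=
  Algebra.TensorProduct.map (AlgHom.id ℂ H) Δb


lemma leg12_tmul (x y : H) : leg12 H (x ⊗ₜ y) = x ⊗ₜ (y ⊗ₜ 1) := rfl

lemma leg23_tmul (x y : H) : leg23 H (x ⊗ₜ y) = 1 ⊗ₜ (x ⊗ₜ y) := rfl

lemma coprod1_tmul (Δb : H →ₐ[ℂ] H ⊗[ℂ] H) (x y : H) :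
    coprod1 H Δb (x ⊗ₜ y) = (Algebra.TensorProduct.assoc ℂ ℂ ℂ H H H) (Δb x ⊗ₜ y) := rfl

lemma coprod2_tmul (Δb : H →ₐ[ℂ] H ⊗[ℂ] H) (x y : H) :
    coprod2 H Δb (x ⊗ₜ y) = x ⊗ₜ Δb y := rfl

lemma lemA (w : H ⊗[ℂ] H) (y : H) :
    (Algebra.TensorProduct.assoc ℂ ℂ ℂ H H H) (w ⊗ₜ y) = leg12 H w * (1 ⊗ₜ (1 ⊗ₜ y)) := by
  induction w using TensorProduct.induction_on with
  | zero => simp [TensorProduct.zero_tmul]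
  | tmul a b => simp [Algebra.TensorProduct.assoc_tmul, leg12_tmul,
      Algebra.TensorProduct.tmul_mul_tmul]
  | add u v hu hv => simp [TensorProduct.add_tmul, hu, hv, add_mul]

lemma lemB (x : H) (w : H ⊗[ℂ] H) :
    (x ⊗ₜ (1 : H ⊗[ℂ] H)) * leg23 H w = x ⊗ₜ w := by
  induction w using TensorProduct.induction_on with
  | zero => simp
  | tmul a b => simp [leg23_tmul, Algebra.TensorProduct.tmul_mul_tmul]
  | add u v hu hv => simp [TensorProduct.tmul_add, hu, hv, mul_add]

lemma lemC (z : H ⊗[ℂ] H) (y : H) :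
    leg12 H z * (1 ⊗ₜ (1 ⊗ₜ y)) = (1 ⊗ₜ (1 ⊗ₜ y)) * leg12 H z := by
  induction z using TensorProduct.induction_on with
  | zero => simp
  | tmul a b => simp [leg12_tmul, Algebra.TensorProduct.tmul_mul_tmul]
  | add u v hu hv => simp [mul_add, add_mul, hu, hv]

lemma lemD (z : H ⊗[ℂ] H) (x : H) :
    (x ⊗ₜ (1 : H ⊗[ℂ] H)) * leg23 H z = leg23 H z * (x ⊗ₜ (1 : H ⊗[ℂ] H)) := by
  induction z using TensorProduct.induction_on with
  | zero => simp
  | tmul a b => simp [leg23_tmul, Algebra.TensorProduct.tmul_mul_tmul]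
  | add u v hu hv => simp [mul_add, add_mul, hu, hv]

lemma conj1 (Δb Δ' : H →ₐ[ℂ] H ⊗[ℂ] H) (G Gi : H ⊗[ℂ] H)
    (h : ∀ x : H, G * Δb x * Gi = Δ' x) (z : H ⊗[ℂ] H) :
    leg12 H G * coprod1 H Δb z * leg12 H Gi = coprod1 H Δ' z := by
  induction z using TensorProduct.induction_on with
  | zero => simp
  | tmul x y =>
      rw [coprod1_tmul, coprod1_tmul, lemA, lemA, ← h x]
      calc leg12 H G * (leg12 H (Δb x) * (1 ⊗ₜ (1 ⊗ₜ y))) * leg12 H Gi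
          = leg12 H G * leg12 H (Δb x) * ((1 ⊗ₜ (1 ⊗ₜ y)) * leg12 H Gi) := by
            rw [← mul_assoc, mul_assoc]
        _ = leg12 H G * leg12 H (Δb x) * (leg12 H Gi * (1 ⊗ₜ (1 ⊗ₜ y))) := by
            rw [← lemC]
        _ = leg12 H (G * Δb x * Gi) * (1 ⊗ₜ (1 ⊗ₜ y)) := by
            simp only [map_mul, mul_assoc]
  | add u v hu hv => simp only [map_add, mul_add, add_mul, hu, hv]

lemma conj2 (Δb Δ' : H →ₐ[ℂ] H ⊗[ℂ] H) (G Gi : H ⊗[ℂ] H)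
    (h : ∀ x : H, G * Δb x * Gi = Δ' x) (z : H ⊗[ℂ] H) :
    leg23 H G * coprod2 H Δb z * leg23 H Gi = coprod2 H Δ' z := by
  induction z using TensorProduct.induction_on with
  | zero => simp
  | tmul x y =>
      rw [coprod2_tmul, coprod2_tmul, ← h y, ← lemB H x (Δb y),
        ← lemB H x (G * Δb y * Gi)]
      calc leg23 H G * ((x ⊗ₜ (1:H ⊗[ℂ] H)) * leg23 H (Δb y)) * leg23 H Gi
          = (leg23 H G * (x ⊗ₜ (1:H ⊗[ℂ] H))) * (leg23 H (Δb y) * leg23 H Gi) := by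
            rw [← mul_assoc, mul_assoc]
        _ = ((x ⊗ₜ (1:H ⊗[ℂ] H)) * leg23 H G) * (leg23 H (Δb y) * leg23 H Gi) := by
            rw [lemD]
        _ = (x ⊗ₜ (1:H ⊗[ℂ] H)) * leg23 H (G * Δb y * Gi) := by
            simp only [map_mul, mul_assoc]
  | add u v hu hv => simp only [map_add, mul_add, add_mul, hu, hv]

/-- the full reversal `a ⊗ (b ⊗ c) ↦ c ⊗ (b ⊗ a)` -/
def revP : H ⊗[ℂ] (H ⊗[ℂ] H) ≃ₐ[ℂ] H ⊗[ℂ] (H ⊗[ℂ] H) :=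
  (Algebra.TensorProduct.assoc ℂ ℂ ℂ H H H).symm.trans
    ((Algebra.TensorProduct.comm ℂ (H ⊗[ℂ] H) H).trans
      (Algebra.TensorProduct.congr (AlgEquiv.refl) (Algebra.TensorProduct.comm ℂ H H)))

lemma revP_tmul (a b c : H) : revP H (a ⊗ₜ (b ⊗ₜ c)) = c ⊗ₜ (b ⊗ₜ a) := by
  have h : (Algebra.TensorProduct.assoc ℂ ℂ ℂ H H H).symm (a ⊗ₜ (b ⊗ₜ c)) = (a ⊗ₜ b) ⊗ₜ c := by
    rw [AlgEquiv.symm_apply_eq, Algebra.TensorProduct.assoc_tmul]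
  simp [revP, h, Algebra.TensorProduct.comm_tmul, Algebra.TensorProduct.congr_apply,
    Algebra.TensorProduct.map_tmul]

lemma P_leg12 (z : H ⊗[ℂ] H) :
    revP H (leg12 H z) = leg23 H ((Algebra.TensorProduct.comm ℂ H H) z) := by
  induction z using TensorProduct.induction_on with
  | zero => simp
  | tmul a b => simp [leg12_tmul, leg23_tmul, revP_tmul, Algebra.TensorProduct.comm_tmul]
  | add u v hu hv => simp [hu, hv]

lemma P_leg23 (z : H ⊗[ℂ] H) :
    revP H (leg23 H z) = leg12 H ((Algebra.TensorProduct.comm ℂ H H) z) := by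
  induction z using TensorProduct.induction_on with
  | zero => simp
  | tmul a b => simp [leg12_tmul, leg23_tmul, revP_tmul, Algebra.TensorProduct.comm_tmul]
  | add u v hu hv => simp [hu, hv]

lemma lemE (w : H ⊗[ℂ] H) (y : H) :
    revP H ((Algebra.TensorProduct.assoc ℂ ℂ ℂ H H H) (w ⊗ₜ y))
      = y ⊗ₜ ((Algebra.TensorProduct.comm ℂ H H) w) := by
  induction w using TensorProduct.induction_on with
  | zero => simp [TensorProduct.zero_tmul]
  | tmul a b => simp [Algebra.TensorProduct.assoc_tmul, revP_tmul,
      Algebra.TensorProduct.comm_tmul]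
  | add u v hu hv => simp [TensorProduct.add_tmul, TensorProduct.tmul_add, hu, hv]

lemma lemF (x : H) (w : H ⊗[ℂ] H) :
    revP H (x ⊗ₜ w)
      = (Algebra.TensorProduct.assoc ℂ ℂ ℂ H H H) (((Algebra.TensorProduct.comm ℂ H H) w) ⊗ₜ x) := by
  induction w using TensorProduct.induction_on with
  | zero => simp [TensorProduct.zero_tmul]
  | tmul a b => simp [Algebra.TensorProduct.assoc_tmul, revP_tmul,
      Algebra.TensorProduct.comm_tmul]
  | add u v hu hv => simp [TensorProduct.add_tmul, TensorProduct.tmul_add, hu, hv]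

lemma P_coprod1 (Δb : H →ₐ[ℂ] H ⊗[ℂ] H) (z : H ⊗[ℂ] H) :
    revP H (coprod1 H Δb z)
      = coprod2 H ((Algebra.TensorProduct.comm ℂ H H).toAlgHom.comp Δb)
          ((Algebra.TensorProduct.comm ℂ H H) z) := by
  induction z using TensorProduct.induction_on with
  | zero => simp
  | tmul x y =>
      rw [coprod1_tmul, lemE, Algebra.TensorProduct.comm_tmul, coprod2_tmul]
      rfl
  | add u v hu hv => simp [hu, hv]

lemma P_coprod2 (Δb : H →ₐ[ℂ] H ⊗[ℂ] H) (z : H ⊗[ℂ] H) :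
    revP H (coprod2 H Δb z)
      = coprod1 H ((Algebra.TensorProduct.comm ℂ H H).toAlgHom.comp Δb)
          ((Algebra.TensorProduct.comm ℂ H H) z) := by
  induction z using TensorProduct.induction_on with
  | zero => simp
  | tmul x y =>
      rw [coprod2_tmul, lemF, Algebra.TensorProduct.comm_tmul, coprod1_tmul]
      rfl
  | add u v hu hv => simp [hu, hv]

section Aux
lemma mul_inv_pair_cancel {M : Type*} [Monoid M] {u v : M} (h : u * v = 1) (t : M) :
    u * (v * t) = t := by rw [← mul_assoc, h, one_mul]

lemma hom_pair {X : Type*} [Ring X] [Algebra ℂ X]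
    (φ : (H ⊗[ℂ] H) →ₐ[ℂ] X) {u v : H ⊗[ℂ] H} (h : u * v = 1) : φ u * φ v = 1 := by
  rw [← map_mul, h, map_one]

lemma hom_pair_cancel {X : Type*} [Ring X] [Algebra ℂ X]
    (φ : (H ⊗[ℂ] H) →ₐ[ℂ] X) {u v : H ⊗[ℂ] H} (h : u * v = 1) (t : X) :
    φ u * (φ v * t) = t := mul_inv_pair_cancel (hom_pair H φ h) t
end Aux

theorem stmt14 (Δ : H →ₐ[ℂ] H ⊗[ℂ] H)
    (F Fi K Ki : H ⊗[ℂ] H)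
    (hF : F * Fi = 1) (hF' : Fi * F = 1)
    (hK : K * Ki = 1) (hK' : Ki * K = 1) :
    -- `𝓡̄ = F^{21}𝓚`
    let Rb : H ⊗[ℂ] H := (Algebra.TensorProduct.comm ℂ H H) F * K
    -- (i): quasi-triangularity cocycle for 𝓡̄, with Δ̄ = Ad(F)∘Δ
    (leg12 H Rb * (leg12 H F * coprod1 H Δ Rb * leg12 H Fi)
        = leg23 H Rb * (leg23 H F * coprod2 H Δ Rb * leg23 H Fi)) →
    -- (ii): cocycle for 𝓚 with respect to Δ̄
    (leg12 H K * (leg12 H F * coprod1 H Δ K * leg12 H Fi)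
        = leg23 H K * (leg23 H F * coprod2 H Δ K * leg23 H Fi)) →
    -- (iii): Ad(𝓚)∘Δ̄ = Δ'
    (∀ x : H, K * (F * Δ x * Fi) * Ki = (Algebra.TensorProduct.comm ℂ H H) (Δ x)) →
    -- conclusion: the cocycle identity for F
    leg12 H F * coprod1 H Δ F = leg23 H F * coprod2 H Δ F := by
  intro Rb h1 h2 h3
  have hRb : Rb = (Algebra.TensorProduct.comm ℂ H H) F * K := rfl
  rw [hRb] at h1
  set σF : H ⊗[ℂ] H := (Algebra.TensorProduct.comm ℂ H H) F with hσF
  set Δ' : H →ₐ[ℂ] H ⊗[ℂ] H := (Algebra.TensorProduct.comm ℂ H H).toAlgHom.comp Δ with hΔ'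
  -- (iii) rearranged
  have h3' : ∀ x : H, (K * F) * Δ x * (Fi * Ki) = Δ' x := by
    intro x
    have hh := h3 x
    simp only [mul_assoc] at hh ⊢
    exact hh
  have key1 := conj1 H Δ Δ' (K * F) (Fi * Ki) h3'
  have key2 := conj2 H Δ Δ' (K * F) (Fi * Ki) h3'
  -- cancellation rules
  have cKiK12 := hom_pair_cancel H (leg12 H) hK'
  have cFiF12 := hom_pair_cancel H (leg12 H) hF'
  have cKiK23 := hom_pair_cancel H (leg23 H) hK'
  have cFiF23 := hom_pair_cancel H (leg23 H) hF'
  have cFFi23 := hom_pair_cancel H (leg23 H) hF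
  have cFFi12 := hom_pair_cancel H (leg12 H) hF
  have cK2 := hom_pair_cancel H (coprod2 H Δ) hK
  have cK1 := hom_pair_cancel H (coprod1 H Δ) hK
  have pK12 : leg12 H K * leg12 H Ki = 1 := hom_pair H (leg12 H) hK
  have pK23 : leg23 H K * leg23 H Ki = 1 := hom_pair H (leg23 H) hK
  -- restructure h1's LHS
  have e1 : leg12 H (σF * K) * (leg12 H F * coprod1 H Δ (σF * K) * leg12 H Fi)
      = (leg12 H σF * coprod1 H Δ' σF)
          * (leg12 H K * (leg12 H F * coprod1 H Δ K * leg12 H Fi)) := by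
    rw [← key1 σF]
    simp only [map_mul, mul_assoc, cKiK12, cFiF12]
  have e2 : leg23 H (σF * K) * (leg23 H F * coprod2 H Δ (σF * K) * leg23 H Fi)
      = (leg23 H σF * coprod2 H Δ' σF)
          * (leg23 H K * (leg23 H F * coprod2 H Δ K * leg23 H Fi)) := by
    rw [← key2 σF]
    simp only [map_mul, mul_assoc, cKiK23, cFiF23]
  rw [e1, e2] at h1
  -- the common invertible factor
  set X := leg12 H K * (leg12 H F * coprod1 H Δ K * leg12 H Fi) with hX
  set Y := leg23 H K * (leg23 H F * coprod2 H Δ K * leg23 H Fi) with hY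
  set Yi := leg23 H F * coprod2 H Δ Ki * (leg23 H Fi * leg23 H Ki) with hYi
  have hYYi : Y * Yi = 1 := by
    rw [hY, hYi]
    simp only [mul_assoc, cFiF23, cK2, cFFi23, pK23]
  have hXYi : X * Yi = 1 := by rw [h2, hYYi]
  set A := leg12 H σF * coprod1 H Δ' σF with hA
  set B := leg23 H σF * coprod2 H Δ' σF with hB
  have hAB : A = B := by
    calc A = A * (X * Yi) := by rw [hXYi, mul_one]
      _ = (A * X) * Yi := (mul_assoc A X Yi).symm
      _ = (B * Y) * Yi := by rw [h1]
      _ = B * (Y * Yi) := mul_assoc B Y Yi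
      _ = B := by rw [hYYi, mul_one]
  apply (revP H).injective
  rw [map_mul, map_mul, P_leg12, P_leg23, P_coprod1, P_coprod2]
  exact hAB.symm
end
end

section
/- Let H be a Hopf algebra, H_R ⊆ H a subalgebra, and Δ, Δ̄ two coproducts on H conjugated by F ∈ H^{⊗̂2} (Δ̄ = Ad(F)∘Δ), such that Δ(H_R) ⊆ H ⊗̂ H_R and Δ̄(H_R) ⊆ H_R ⊗̂ H. Suppose F = F₂F₁ with F₁ ∈ H ⊗̂ H_R and F₂ ∈ H_R ⊗̂ H. Then the map Δ_R := Ad(F₁)∘Δ sends H_R into H_R ⊗̂ H_R, and is an algebra morphism H_R → H_R ⊗̂ H_R. -/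
/- STATEMENT 16: Let `H` be a Hopf algebra, `H_R ⊆ H` a subalgebra, and `Δ, Δ̄` two
coproducts conjugated by `F` (`Δ̄ = Ad(F)∘Δ`), with `Δ(H_R) ⊆ H ⊗̂ H_R` and
`Δ̄(H_R) ⊆ H_R ⊗̂ H`.  Suppose `F = F₂F₁` with `F₁ ∈ H ⊗̂ H_R`, `F₂ ∈ H_R ⊗̂ H`.
Then `Δ_R := Ad(F₁)∘Δ` sends `H_R` into `H_R ⊗̂ H_R` and is an algebra morphism
`H_R → H_R ⊗̂ H_R`. -/

open TensorProduct

theorem stmt16 (H : Type*) [Ring H] [Algebra ℂ H]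
    (HR : Subalgebra ℂ H)
    (Δ : H →ₐ[ℂ] H ⊗[ℂ] H)
    -- the subalgebras H ⊗̂ H_R, H_R ⊗̂ H, H_R ⊗̂ H_R of H ⊗ H
    (HtR RtH RtR : Subalgebra ℂ (H ⊗[ℂ] H))
    (hHtR : HtR = (Algebra.TensorProduct.map (AlgHom.id ℂ H) HR.val).range)
    (hRtH : RtH = (Algebra.TensorProduct.map HR.val (AlgHom.id ℂ H)).range)
    (hRtR : RtR = (Algebra.TensorProduct.map HR.val HR.val).range)
    -- (H ⊗̂ H_R) ∩ (H_R ⊗̂ H) = H_R ⊗̂ H_R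
    (hcap : HtR ⊓ RtH = RtR)
    (F Fi F1 F1i F2 F2i : H ⊗[ℂ] H)
    (hF : F * Fi = 1) (hF' : Fi * F = 1)
    (hF1 : F1 * F1i = 1) (hF1' : F1i * F1 = 1)
    (hF2 : F2 * F2i = 1) (hF2' : F2i * F2 = 1)
    (hF1mem : F1 ∈ HtR) (hF1imem : F1i ∈ HtR)
    (hF2mem : F2 ∈ RtH) (hF2imem : F2i ∈ RtH)
    -- the factorization F = F₂F₁
    (hfact : F = F2 * F1)
    -- Δ(H_R) ⊆ H ⊗̂ H_R and Δ̄(H_R) ⊆ H_R ⊗̂ H, where Δ̄ = Ad(F)∘Δ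
    (hΔR : ∀ x ∈ HR, Δ x ∈ HtR)
    (hΔbarR : ∀ x ∈ HR, F * Δ x * Fi ∈ RtH) :
    -- Δ_R = Ad(F₁)∘Δ maps H_R into H_R ⊗̂ H_R and is an algebra morphism
    (∀ x ∈ HR, F1 * Δ x * F1i ∈ RtR) ∧
    (∀ x y : H, F1 * Δ (x * y) * F1i = (F1 * Δ x * F1i) * (F1 * Δ y * F1i)) ∧
    (F1 * Δ 1 * F1i = 1) := by
  have hFi : Fi = F1i * F2i := by
    have h1 : F * (F1i * F2i) = 1 := by
      rw [hfact]
      calc F2 * F1 * (F1i * F2i) = F2 * (F1 * F1i) * F2i := by noncomm_ring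
        _ = 1 := by rw [hF1, mul_one, hF2]
    calc Fi = Fi * (F * (F1i * F2i)) := by rw [h1, mul_one]
      _ = (Fi * F) * (F1i * F2i) := by noncomm_ring
      _ = F1i * F2i := by rw [hF', one_mul]
  refine ⟨?_, ?_, ?_⟩
  · intro x hx
    rw [← hcap]
    constructor
    · exact mul_mem (mul_mem hF1mem (hΔR x hx)) hF1imem
    · have key : F1 * Δ x * F1i = F2i * (F * Δ x * Fi) * F2 := by
        rw [hfact, hFi]
        calc F1 * Δ x * F1i
            = (F2i * F2) * F1 * Δ x * F1i * (F2i * F2) := by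
              rw [hF2', one_mul, mul_one]
          _ = F2i * (F2 * F1 * Δ x * (F1i * F2i)) * F2 := by noncomm_ring
      rw [key]
      exact mul_mem (mul_mem hF2imem (hΔbarR x hx)) hF2mem
  · intro x y
    rw [map_mul]
    calc F1 * (Δ x * Δ y) * F1i
        = F1 * Δ x * (F1i * F1) * Δ y * F1i := by rw [hF1', mul_one]; noncomm_ring
      _ = (F1 * Δ x * F1i) * (F1 * Δ y * F1i) := by noncomm_ring
  · rw [map_one, mul_one, hF1]
end

section
/- Let Z be a set, σ : Z → Z a bijection, and q : Z² → ℂ^× a function satisfying q(z,w)q(w,z) = 1 for all z,w. Let A(Z,σ,q) be the ℂ-algebra with generators e(z), f(z), K^±(z), K^±(z)^{−1} (z ∈ Z) and relations: K^±(z)K^±(z)^{−1} = 1; (K⁺(z),K⁺(w)) = 1; (K⁺(z),K⁻(w)) = q(z,w)/q(z,σ(w)); (K⁻(z),K⁻(w)) = q(σ(z),σ(w))/q(z,w); (K⁺(z),e(w)) = q(z,w); (K⁻(z),e(w)) = q(w,σ(z)); (K⁺(z),f(w)) = q(w,z); (K⁻(z),f(w)) = q(z,w); (e(z),e(w)) =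 q(z,w); (f(z),f(w)) = q(w,z); and [e(z),f(w)] = δ_{z,w}K⁺(z) − δ_{z,σ(w)}K⁻(w)^{−1}, where (a,b) := aba^{−1}b^{−1}. Then the assignment w_Z(e(z)) = −K⁻(σ^{−1}(z))f(σ^{−1}(z)), w_Z(f(z)) = −e(z)K⁺(z)^{−1}, w_Z(K^±(z)) = K^±(z)^{−1} extends to an algebra endomorphism (automorphism) of A(Z,σ,q). -/
/- STATEMENT 18: The discrete algebra `A(Z,σ,q)` and its quantum Weyl group
automorphism `w_Z`.  `Z` is a set, `σ : Z → Z` a bijection, `q : Z² → ℂ^×` with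
`q(z,w)q(w,z) = 1`.  `A(Z,σ,q)` is presented by generators `e(z), f(z), K^±(z),
K^±(z)⁻¹` with the scalar-commutation relations of section "Discrete analogues", and
`w_Z(e(z)) = −K⁻(σ⁻¹z)f(σ⁻¹z)`, `w_Z(f(z)) = −e(z)K⁺(z)⁻¹`, `w_Z(K^±(z)) = K^±(z)⁻¹`
extends to an algebra automorphism of `A(Z,σ,q)`. -/

noncomputable section

/-- generators of the discrete algebra -/
inductive Gen (Z : Type*) : Type _
  | e : Z → Gen Z
  | f : Z → Gen Z
  | Kp : Z → Gen Z
  | Kpi : Z → Gen Z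
  | Km : Z → Gen Z
  | Kmi : Z → Gen Z

/-- generator as element of the free algebra -/
def g {Z : Type*} (x : Gen Z) : FreeAlgebra ℂ (Gen Z) := FreeAlgebra.ι ℂ x

/-- scalar as element of the free algebra -/
def sc {Z : Type*} (c : ℂ) : FreeAlgebra ℂ (Gen Z) := algebraMap ℂ _ c

/-- the defining relations of `A(Z,σ,q)`; `(a,b) = c` with `a` invertible is encoded
as the scalar-commutation relation `a·b = c·(b·a)`. -/
inductive DRel (Z : Type*) [DecidableEq Z] (σ : Z ≃ Z) (q : Z → Z → ℂ) :
    FreeAlgebra ℂ (Gen Z) → FreeAlgebra ℂ (Gen Z) → Prop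
  | KpKpi (z : Z) : DRel Z σ q (g (Gen.Kp z) * g (Gen.Kpi z)) 1
  | KpiKp (z : Z) : DRel Z σ q (g (Gen.Kpi z) * g (Gen.Kp z)) 1
  | KmKmi (z : Z) : DRel Z σ q (g (Gen.Km z) * g (Gen.Kmi z)) 1
  | KmiKm (z : Z) : DRel Z σ q (g (Gen.Kmi z) * g (Gen.Km z)) 1
  | KpKp (z w : Z) :
      DRel Z σ q (g (Gen.Kp z) * g (Gen.Kp w)) (g (Gen.Kp w) * g (Gen.Kp z))
  | KpKm (z w : Z) : DRel Z σ q (g (Gen.Kp z) * g (Gen.Km w))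
      (sc (q z w / q z (σ w)) * (g (Gen.Km w) * g (Gen.Kp z)))
  | KmKm (z w : Z) : DRel Z σ q (g (Gen.Km z) * g (Gen.Km w))
      (sc (q (σ z) (σ w) / q z w) * (g (Gen.Km w) * g (Gen.Km z)))
  | Kpe (z w : Z) : DRel Z σ q (g (Gen.Kp z) * g (Gen.e w))
      (sc (q z w) * (g (Gen.e w) * g (Gen.Kp z)))
  | Kme (z w : Z) : DRel Z σ q (g (Gen.Km z) * g (Gen.e w))
      (sc (q w (σ z)) * (g (Gen.e w) * g (Gen.Km z)))
  | Kpf (z w : Z) : DRel Z σ q (g (Gen.Kp z) * g (Gen.f w))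
      (sc (q w z) * (g (Gen.f w) * g (Gen.Kp z)))
  | Kmf (z w : Z) : DRel Z σ q (g (Gen.Km z) * g (Gen.f w))
      (sc (q z w) * (g (Gen.f w) * g (Gen.Km z)))
  | ee (z w : Z) : DRel Z σ q (g (Gen.e z) * g (Gen.e w))
      (sc (q z w) * (g (Gen.e w) * g (Gen.e z)))
  | ff (z w : Z) : DRel Z σ q (g (Gen.f z) * g (Gen.f w))
      (sc (q w z) * (g (Gen.f w) * g (Gen.f z)))
  | ef (z w : Z) : DRel Z σ q (g (Gen.e z) * g (Gen.f w))
      (g (Gen.f w) * g (Gen.e z)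
        + (if z = w then g (Gen.Kp z) else 0)
        - (if z = σ w then g (Gen.Kmi w) else 0))

/-- the discrete algebra `A(Z,σ,q)` -/
abbrev Adisc (Z : Type*) [DecidableEq Z] (σ : Z ≃ Z) (q : Z → Z → ℂ) :=
  RingQuot (DRel Z σ q)

/-- image of a generator in `A(Z,σ,q)` -/
def gen {Z : Type*} [DecidableEq Z] (σ : Z ≃ Z) (q : Z → Z → ℂ) (x : Gen Z) :
    Adisc Z σ q :=
  RingQuot.mkAlgHom ℂ (DRel Z σ q) (g x)
namespace Stmt18Aux

variable {Z : Type*} [DecidableEq Z] (σ : Z ≃ Z) (q : Z → Z → ℂ)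

/-- generators in the quotient -/
def GE (z : Z) : Adisc Z σ q := gen σ q (Gen.e z)
def GF (z : Z) : Adisc Z σ q := gen σ q (Gen.f z)
def GP (z : Z) : Adisc Z σ q := gen σ q (Gen.Kp z)
def GPi (z : Z) : Adisc Z σ q := gen σ q (Gen.Kpi z)
def GM (z : Z) : Adisc Z σ q := gen σ q (Gen.Km z)
def GMi (z : Z) : Adisc Z σ q := gen σ q (Gen.Kmi z)

lemma relEq {x y : FreeAlgebra ℂ (Gen Z)} (h : DRel Z σ q x y) :
    RingQuot.mkAlgHom ℂ (DRel Z σ q) x = RingQuot.mkAlgHom ℂ (DRel Z σ q) y :=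
  RingQuot.mkAlgHom_rel ℂ h

lemma bPPi (z : Z) : GP σ q z * GPi σ q z = 1 := by
  simpa [GP, GPi, gen, map_mul] using relEq σ q (DRel.KpKpi z)

lemma bPiP (z : Z) : GPi σ q z * GP σ q z = 1 := by
  simpa [GP, GPi, gen, map_mul] using relEq σ q (DRel.KpiKp z)

lemma bMMi (z : Z) : GM σ q z * GMi σ q z = 1 := by
  simpa [GM, GMi, gen, map_mul] using relEq σ q (DRel.KmKmi z)

lemma bMiM (z : Z) : GMi σ q z * GM σ q z = 1 := by
  simpa [GM, GMi, gen, map_mul] using relEq σ q (DRel.KmiKm z)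

lemma bPP (z w : Z) : GP σ q z * GP σ q w = GP σ q w * GP σ q z := by
  simpa [GP, gen, map_mul] using relEq σ q (DRel.KpKp z w)

lemma bPM (z w : Z) : GP σ q z * GM σ q w
    = (q z w / q z (σ w)) • (GM σ q w * GP σ q z) := by
  simpa [GP, GM, gen, sc, map_mul, Algebra.smul_def] using relEq σ q (DRel.KpKm z w)

lemma bMM (z w : Z) : GM σ q z * GM σ q w
    = (q (σ z) (σ w) / q z w) • (GM σ q w * GM σ q z) := by
  simpa [GM, gen, sc, map_mul, Algebra.smul_def] using relEq σ q (DRel.KmKm z w)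

lemma bPE (z w : Z) : GP σ q z * GE σ q w = q z w • (GE σ q w * GP σ q z) := by
  simpa [GP, GE, gen, sc, map_mul, Algebra.smul_def] using relEq σ q (DRel.Kpe z w)

lemma bME (z w : Z) : GM σ q z * GE σ q w = q w (σ z) • (GE σ q w * GM σ q z) := by
  simpa [GM, GE, gen, sc, map_mul, Algebra.smul_def] using relEq σ q (DRel.Kme z w)

lemma bPF (z w : Z) : GP σ q z * GF σ q w = q w z • (GF σ q w * GP σ q z) := by
  simpa [GP, GF, gen, sc, map_mul, Algebra.smul_def] using relEq σ q (DRel.Kpf z w)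

lemma bMF (z w : Z) : GM σ q z * GF σ q w = q z w • (GF σ q w * GM σ q z) := by
  simpa [GM, GF, gen, sc, map_mul, Algebra.smul_def] using relEq σ q (DRel.Kmf z w)

lemma bEE (z w : Z) : GE σ q z * GE σ q w = q z w • (GE σ q w * GE σ q z) := by
  simpa [GE, gen, sc, map_mul, Algebra.smul_def] using relEq σ q (DRel.ee z w)

lemma bFF (z w : Z) : GF σ q z * GF σ q w = q w z • (GF σ q w * GF σ q z) := by
  simpa [GF, gen, sc, map_mul, Algebra.smul_def] using relEq σ q (DRel.ff z w)

lemma bEF (z w : Z) : GE σ q z * GF σ q w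
    = GF σ q w * GE σ q z + (if z = w then GP σ q z else 0)
      - (if z = σ w then GMi σ q w else 0) := by
  simpa [GE, GF, GP, GMi, gen, map_mul, map_add, map_sub, apply_ite
    (RingQuot.mkAlgHom ℂ (DRel Z σ q)), map_zero] using relEq σ q (DRel.ef z w)

lemma Amul_neg (a b : Adisc Z σ q) : a * -b = -(a * b) := mul_neg a b
lemma Aneg_mul (a b : Adisc Z σ q) : -a * b = -(a * b) := neg_mul a b
lemma Aneg_neg (a : Adisc Z σ q) : - -a = a := neg_neg a
lemma Aneg_inj {a b : Adisc Z σ q} : -a = -b ↔ a = b := neg_inj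
lemma Asmul_neg (c : ℂ) (a : Adisc Z σ q) : c • (-a) = -(c • a) := smul_neg c a

end Stmt18Aux
namespace Stmt18Aux
set_option linter.unusedSectionVars false

section Helpers
variable {R : Type*} [Ring R] [Algebra ℂ R]

lemma rev_comm {a b : R} {c : ℂ} (hc : c ≠ 0) (h : a * b = c • (b * a)) :
    b * a = c⁻¹ • (a * b) := by
  rw [h, smul_smul, inv_mul_cancel₀ hc, one_smul]

lemma inv_comm {a ai b : R} {c : ℂ} (hc : c ≠ 0) (h1 : a * ai = 1) (h2 : ai * a = 1)
    (h : a * b = c • (b * a)) : ai * b = c⁻¹ • (b * ai) := by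
  have key : b * ai = c • (ai * b) := by
    calc b * ai = ai * (a * b) * ai := by rw [← mul_assoc ai a b, h2, one_mul]
    _ = ai * (c • (b * a)) * ai := by rw [h]
    _ = c • (ai * b * (a * ai)) := by
        simp only [mul_smul_comm, smul_mul_assoc, mul_assoc]
    _ = c • (ai * b) := by rw [h1, mul_one]
  exact rev_comm hc key

lemma inv_inv_comm {a ai b bi : R} {c : ℂ} (hc : c ≠ 0) (ha1 : a * ai = 1)
    (ha2 : ai * a = 1) (hb1 : b * bi = 1) (hb2 : bi * b = 1)
    (h : a * b = c • (b * a)) : ai * bi = c • (bi * ai) := by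
  have h1 := inv_comm hc ha1 ha2 h
  have h2 : b * ai = c • (ai * b) := by
    simpa using rev_comm (inv_ne_zero hc) h1
  have h3 := inv_comm hc hb1 hb2 h2
  simpa using rev_comm (inv_ne_zero hc) h3

lemma swapL {a b x : R} {c : ℂ} (h : a * b = c • (b * a)) :
    a * (b * x) = c • (b * (a * x)) := by
  rw [← mul_assoc, h, smul_mul_assoc, mul_assoc]

end Helpers

variable {Z : Type*} [DecidableEq Z] (σ : Z ≃ Z) {q : Z → Z → ℂ}
  (hq : ∀ z w, q z w * q w z = 1)
include hq

lemma qne (z w : Z) : q z w ≠ 0 := left_ne_zero_of_mul_eq_one (hq z w)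

lemma qinv (z w : Z) : (q z w)⁻¹ = q w z := inv_eq_of_mul_eq_one_right (hq z w)

lemma dPiE (z w : Z) : GPi σ q z * GE σ q w = q w z • (GE σ q w * GPi σ q z) := by
  have := inv_comm (qne hq z w) (bPPi σ q z) (bPiP σ q z) (bPE σ q z w)
  rwa [qinv hq z w] at this

lemma dMiE (z w : Z) : GMi σ q z * GE σ q w = q (σ z) w • (GE σ q w * GMi σ q z) := by
  have := inv_comm (qne hq w (σ z)) (bMMi σ q z) (bMiM σ q z) (bME σ q z w)
  rwa [qinv hq w (σ z)] at this

lemma dPiF (z w : Z) : GPi σ q z * GF σ q w = q z w • (GF σ q w * GPi σ q z) := by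
  have := inv_comm (qne hq w z) (bPPi σ q z) (bPiP σ q z) (bPF σ q z w)
  rwa [qinv hq w z] at this

lemma dMiF (z w : Z) : GMi σ q z * GF σ q w = q w z • (GF σ q w * GMi σ q z) := by
  have := inv_comm (qne hq z w) (bMMi σ q z) (bMiM σ q z) (bMF σ q z w)
  rwa [qinv hq z w] at this

lemma dPiPi (z w : Z) : GPi σ q z * GPi σ q w = GPi σ q w * GPi σ q z := by
  have h : GP σ q z * GP σ q w = (1 : ℂ) • (GP σ q w * GP σ q z) := by
    rw [one_smul]; exact bPP σ q z w
  have := inv_inv_comm one_ne_zero (bPPi σ q z) (bPiP σ q z) (bPPi σ q w)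
    (bPiP σ q w) h
  simpa using this

lemma dPiMi (z w : Z) : GPi σ q z * GMi σ q w
    = (q z w / q z (σ w)) • (GMi σ q w * GPi σ q z) :=
  inv_inv_comm (div_ne_zero (qne hq z w) (qne hq z (σ w))) (bPPi σ q z)
    (bPiP σ q z) (bMMi σ q w) (bMiM σ q w) (bPM σ q z w)

lemma dMiMi (z w : Z) : GMi σ q z * GMi σ q w
    = (q (σ z) (σ w) / q z w) • (GMi σ q w * GMi σ q z) :=
  inv_inv_comm (div_ne_zero (qne hq (σ z) (σ w)) (qne hq z w)) (bMMi σ q z)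
    (bMiM σ q z) (bMMi σ q w) (bMiM σ q w) (bMM σ q z w)

lemma dPiM (z w : Z) : GPi σ q z * GM σ q w
    = (q z (σ w) / q z w) • (GM σ q w * GPi σ q z) := by
  have := inv_comm (div_ne_zero (qne hq z w) (qne hq z (σ w))) (bPPi σ q z)
    (bPiP σ q z) (bPM σ q z w)
  rwa [inv_div] at this

lemma dMiM (z w : Z) : GMi σ q z * GM σ q w
    = (q z w / q (σ z) (σ w)) • (GM σ q w * GMi σ q z) := by
  have := inv_comm (div_ne_zero (qne hq (σ z) (σ w)) (qne hq z w)) (bMMi σ q z)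
    (bMiM σ q z) (bMM σ q z w)
  rwa [inv_div] at this

lemma dMiPi (z w : Z) : GMi σ q z * GPi σ q w
    = (q w (σ z) / q w z) • (GPi σ q w * GMi σ q z) := by
  have h := inv_inv_comm (div_ne_zero (qne hq w z) (qne hq w (σ z))) (bPPi σ q w)
    (bPiP σ q w) (bMMi σ q z) (bMiM σ q z) (bPM σ q w z)
  have := rev_comm (div_ne_zero (qne hq w z) (qne hq w (σ z))) h
  rwa [inv_div] at this

lemma dEM (z w : Z) : GE σ q w * GM σ q z = q (σ z) w • (GM σ q z * GE σ q w) := by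
  have := rev_comm (qne hq w (σ z)) (bME σ q z w)
  rwa [qinv hq w (σ z)] at this

lemma dFM (z w : Z) : GF σ q w * GM σ q z = q w z • (GM σ q z * GF σ q w) := by
  have := rev_comm (qne hq z w) (bMF σ q z w)
  rwa [qinv hq z w] at this

lemma dEPi (z w : Z) : GE σ q w * GPi σ q z = q z w • (GPi σ q z * GE σ q w) := by
  have := rev_comm (qne hq w z) (dPiE σ hq z w)
  rwa [qinv hq w z] at this

lemma dFPi (z w : Z) : GF σ q w * GPi σ q z = q w z • (GPi σ q z * GF σ q w) := by
  have := rev_comm (qne hq z w) (dPiF σ hq z w)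
  rwa [qinv hq z w] at this

end Stmt18Aux
namespace Stmt18Aux
set_option linter.unusedSectionVars false

variable {Z : Type*} [DecidableEq Z] (σ : Z ≃ Z) {q : Z → Z → ℂ}
  (hq : ∀ z w, q z w * q w z = 1)
include hq

/-! verification lemmas for `W` (the automorphism `w_Z`) -/

lemma wPE (z u : Z) : GPi σ q z * (GM σ q u * GF σ q u)
    = q z (σ u) • (GM σ q u * (GF σ q u * GPi σ q z)) := by
  rw [swapL (dPiM σ hq z u), dPiF σ hq z u, mul_smul_comm, smul_smul]
  congr 1
  field_simp [qne hq z u]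

lemma wME (z u : Z) : GMi σ q z * (GM σ q u * GF σ q u)
    = q (σ u) (σ z) • (GM σ q u * (GF σ q u * GMi σ q z)) := by
  rw [swapL (dMiM σ hq z u), dMiF σ hq z u, mul_smul_comm, smul_smul]
  congr 1
  rw [div_mul_eq_mul_div, hq z u, one_div, qinv hq (σ z) (σ u)]

lemma wPF (z w : Z) : GPi σ q z * (GE σ q w * GPi σ q w)
    = q w z • (GE σ q w * (GPi σ q w * GPi σ q z)) := by
  rw [swapL (dPiE σ hq z w), dPiPi σ hq z w]

lemma wMF (z w : Z) : GMi σ q z * (GE σ q w * GPi σ q w)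
    = q z w • (GE σ q w * (GPi σ q w * GMi σ q z)) := by
  rw [swapL (dMiE σ hq z w), dMiPi σ hq z w, mul_smul_comm, smul_smul]
  congr 1
  rw [mul_div_assoc', hq (σ z) w, one_div, qinv hq w z]

lemma wEE (u v : Z) : GM σ q u * (GF σ q u * (GM σ q v * GF σ q v))
    = q (σ u) (σ v) • (GM σ q v * (GF σ q v * (GM σ q u * GF σ q u))) := by
  rw [swapL (dFM σ hq v u), mul_smul_comm, swapL (bMM σ q u v), smul_smul,
    bFF σ q u v, mul_smul_comm, mul_smul_comm, smul_smul,
    swapL (bMF σ q u v), mul_smul_comm, smul_smul]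
  congr 1
  rw [← qinv hq u v]
  field_simp [qne hq u v]

lemma wFF (z w : Z) : GE σ q z * (GPi σ q z * (GE σ q w * GPi σ q w))
    = q w z • (GE σ q w * (GPi σ q w * (GE σ q z * GPi σ q z))) := by
  rw [swapL (dPiE σ hq z w), mul_smul_comm, swapL (bEE σ q z w), smul_smul,
    dPiPi σ hq z w, swapL (dEPi σ hq w z), mul_smul_comm, smul_smul]
  congr 1
  rw [← qinv hq w z]
  field_simp [qne hq w z]

lemma wEFmain (u w : Z) : GE σ q w * (GPi σ q w * (GM σ q u * GF σ q u))
    = GM σ q u * (GE σ q w * (GF σ q u * GPi σ q w)) := by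
  rw [swapL (dPiM σ hq w u), mul_smul_comm, dPiF σ hq w u, mul_smul_comm,
    mul_smul_comm, smul_smul, swapL (dEM σ hq u w), smul_smul]
  rw [show q w (σ u) / q w u * q w u * q (σ u) w = 1 by
    rw [← qinv hq w (σ u)]; field_simp [qne hq w u, qne hq w (σ u)], one_smul]

/-! verification lemmas for `V` (the inverse automorphism) -/

lemma vPE (z w : Z) : GPi σ q z * (GF σ q w * GPi σ q w)
    = q z w • (GF σ q w * (GPi σ q w * GPi σ q z)) := by
  rw [swapL (dPiF σ hq z w), dPiPi σ hq z w]

lemma vME (z w : Z) : GMi σ q z * (GF σ q w * GPi σ q w)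
    = q w (σ z) • (GF σ q w * (GPi σ q w * GMi σ q z)) := by
  rw [swapL (dMiF σ hq z w), dMiPi σ hq z w, mul_smul_comm, smul_smul]
  congr 1
  field_simp [qne hq w z]

lemma vPF (z w : Z) : GPi σ q z * (GM σ q w * GE σ q (σ w))
    = q w z • (GM σ q w * (GE σ q (σ w) * GPi σ q z)) := by
  rw [swapL (dPiM σ hq z w), dPiE σ hq z (σ w), mul_smul_comm, smul_smul]
  congr 1
  rw [← qinv hq z (σ w), ← qinv hq z w]
  field_simp [qne hq z (σ w), qne hq z w]

lemma vMF (z w : Z) : GMi σ q z * (GM σ q w * GE σ q (σ w))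
    = q z w • (GM σ q w * (GE σ q (σ w) * GMi σ q z)) := by
  rw [swapL (dMiM σ hq z w), dMiE σ hq z (σ w), mul_smul_comm, smul_smul]
  congr 1
  field_simp [qne hq (σ z) (σ w)]

lemma vEE (z w : Z) : GF σ q z * (GPi σ q z * (GF σ q w * GPi σ q w))
    = q z w • (GF σ q w * (GPi σ q w * (GF σ q z * GPi σ q z))) := by
  rw [swapL (dPiF σ hq z w), mul_smul_comm, swapL (bFF σ q z w), smul_smul,
    dPiPi σ hq z w, swapL (dFPi σ hq w z), mul_smul_comm, smul_smul]
  congr 1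
  rw [← qinv hq z w]
  field_simp [qne hq z w]

lemma vFF (z w : Z) : GM σ q z * (GE σ q (σ z) * (GM σ q w * GE σ q (σ w)))
    = q w z • (GM σ q w * (GE σ q (σ w) * (GM σ q z * GE σ q (σ z)))) := by
  rw [swapL (dEM σ hq w (σ z)), mul_smul_comm, swapL (bMM σ q z w), smul_smul,
    bEE σ q (σ z) (σ w), mul_smul_comm, mul_smul_comm, smul_smul,
    swapL (bME σ q z (σ w)), mul_smul_comm, smul_smul]
  congr 1
  rw [← qinv hq (σ z) (σ w), ← qinv hq z w]
  field_simp [qne hq (σ z) (σ w), qne hq z w]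

lemma vEFmain (z w : Z) : GF σ q z * (GPi σ q z * (GM σ q w * GE σ q (σ w)))
    = GM σ q w * (GF σ q z * (GE σ q (σ w) * GPi σ q z)) := by
  rw [swapL (dPiM σ hq z w), mul_smul_comm, swapL (dFM σ hq w z), smul_smul,
    dPiE σ hq z (σ w), mul_smul_comm, mul_smul_comm, smul_smul]
  rw [show q z (σ w) / q z w * q z w * q (σ w) z = 1 by
    rw [← qinv hq z (σ w)]; field_simp [qne hq z (σ w), qne hq z w], one_smul]

end Stmt18Aux
namespace Stmt18Aux
set_option linter.unusedSectionVars false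

variable {Z : Type*} [DecidableEq Z] (σ : Z ≃ Z) {q : Z → Z → ℂ}
  (hq : ∀ z w, q z w * q w z = 1)
include hq

lemma wEF (z w u : Z) (hu : σ u = z) :
    (GM σ q u * GF σ q u) * (GE σ q w * GPi σ q w)
    = (GE σ q w * GPi σ q w) * (GM σ q u * GF σ q u)
      + (if z = w then GPi σ q z else 0) - (if z = σ w then GM σ q w else 0) := by
  have hFE : GF σ q u * GE σ q w
      = GE σ q w * GF σ q u - (if w = u then GP σ q w else 0)
        + (if w = σ u then GMi σ q u else 0) := by
    rw [bEF σ q w u]; abel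
  have h1 : (GM σ q u * GF σ q u) * (GE σ q w * GPi σ q w)
      = GM σ q u * ((GF σ q u * GE σ q w) * GPi σ q w) := by
    simp only [mul_assoc]
  rw [h1, hFE]
  simp only [sub_mul, add_mul, ite_mul, zero_mul, mul_sub, mul_add, mul_ite, mul_zero]
  have hm : GM σ q u * (GE σ q w * GF σ q u * GPi σ q w)
      = GE σ q w * GPi σ q w * (GM σ q u * GF σ q u) := by
    have h2 := wEFmain σ hq u w
    simp only [mul_assoc] at h2 ⊢
    rw [← h2]
  have hi1 : (if w = u then GM σ q u * (GP σ q w * GPi σ q w) else 0)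
      = (if z = σ w then GM σ q w else 0) := by
    rcases eq_or_ne w u with h | h
    · subst h
      rw [if_pos rfl, if_pos hu.symm, bPPi, mul_one]
    · rw [if_neg h, if_neg fun hz => h (σ.injective (hu.trans hz)).symm]
  have hi2 : (if w = σ u then GM σ q u * (GMi σ q u * GPi σ q w) else 0)
      = (if z = w then GPi σ q z else 0) := by
    rcases eq_or_ne w (σ u) with h | h
    · rw [if_pos h, if_pos (by rw [← hu]; exact h.symm), ← mul_assoc, bMMi, one_mul,
        show w = z from h.trans hu]
    · rw [if_neg h, if_neg fun hz => h (hz.symm.trans hu.symm)]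
  rw [hm, hi1, hi2]
  abel

lemma vEF (z w : Z) :
    (GF σ q z * GPi σ q z) * (GM σ q w * GE σ q (σ w))
    = (GM σ q w * GE σ q (σ w)) * (GF σ q z * GPi σ q z)
      + (if z = w then GPi σ q z else 0) - (if z = σ w then GM σ q w else 0) := by
  have hFE : GF σ q z * GE σ q (σ w)
      = GE σ q (σ w) * GF σ q z - (if σ w = z then GP σ q (σ w) else 0)
        + (if σ w = σ z then GMi σ q z else 0) := by
    rw [bEF σ q (σ w) z]; abel
  have h1 : (GF σ q z * GPi σ q z) * (GM σ q w * GE σ q (σ w))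
      = GM σ q w * ((GF σ q z * GE σ q (σ w)) * GPi σ q z) := by
    have h2 := vEFmain σ hq z w
    simp only [mul_assoc] at h2 ⊢
    rw [h2]
  rw [h1, hFE]
  simp only [sub_mul, add_mul, ite_mul, zero_mul, mul_sub, mul_add, mul_ite, mul_zero]
  have hm : GM σ q w * (GE σ q (σ w) * GF σ q z * GPi σ q z)
      = GM σ q w * GE σ q (σ w) * (GF σ q z * GPi σ q z) := by
    simp only [mul_assoc]
  have hi1 : (if σ w = z then GM σ q w * (GP σ q (σ w) * GPi σ q z) else 0)
      = (if z = σ w then GM σ q w else 0) := by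
    rcases eq_or_ne (σ w) z with h | h
    · rw [if_pos h, if_pos h.symm, h, bPPi, mul_one]
    · rw [if_neg h, if_neg fun hz => h hz.symm]
  have hi2 : (if σ w = σ z then GM σ q w * (GMi σ q z * GPi σ q z) else 0)
      = (if z = w then GPi σ q z else 0) := by
    rcases eq_or_ne (σ w) (σ z) with h | h
    · have hwz : w = z := σ.injective h
      rw [if_pos h, if_pos hwz.symm, hwz, ← mul_assoc, bMMi, one_mul]
    · rw [if_neg h, if_neg fun hz => h (by rw [hz])]
  rw [hm, hi1, hi2]
  abel

end Stmt18Aux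
namespace Stmt18Aux

/-- images of generators under `w_Z` -/
def imW {Z : Type*} [DecidableEq Z] (σ : Z ≃ Z) (q : Z → Z → ℂ) :
    Gen Z → Adisc Z σ q
  | Gen.e z => -(GM σ q (σ.symm z) * GF σ q (σ.symm z))
  | Gen.f z => -(GE σ q z * GPi σ q z)
  | Gen.Kp z => GPi σ q z
  | Gen.Kpi z => GP σ q z
  | Gen.Km z => GMi σ q z
  | Gen.Kmi z => GM σ q z

/-- images of generators under the inverse of `w_Z` -/
def imV {Z : Type*} [DecidableEq Z] (σ : Z ≃ Z) (q : Z → Z → ℂ) :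
    Gen Z → Adisc Z σ q
  | Gen.e z => -(GF σ q z * GPi σ q z)
  | Gen.f z => -(GM σ q z * GE σ q (σ z))
  | Gen.Kp z => GPi σ q z
  | Gen.Kpi z => GP σ q z
  | Gen.Km z => GMi σ q z
  | Gen.Kmi z => GM σ q z

variable {Z : Type*} [DecidableEq Z] (σ : Z ≃ Z) {q : Z → Z → ℂ}
  (hq : ∀ z w, q z w * q w z = 1)
include hq

set_option linter.unusedSectionVars false

lemma relW : ∀ ⦃x y⦄, DRel Z σ q x y →
    FreeAlgebra.lift ℂ (imW σ q) x = FreeAlgebra.lift ℂ (imW σ q) y := by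
  intro x y h
  induction h with
  | KpKpi z =>
      simpa [g, imW] using bPiP σ q z
  | KpiKp z =>
      simpa [g, imW] using bPPi σ q z
  | KmKmi z =>
      simpa [g, imW] using bMiM σ q z
  | KmiKm z =>
      simpa [g, imW] using bMMi σ q z
  | KpKp z w =>
      simpa [g, imW] using dPiPi σ hq z w
  | KpKm z w =>
      simpa [g, imW, sc, Algebra.smul_def] using dPiMi σ hq z w
  | KmKm z w =>
      simpa [g, imW, sc, Algebra.smul_def] using dMiMi σ hq z w
  | Kpe z w =>
      have h := wPE σ hq z (σ.symm w)
      rw [Equiv.apply_symm_apply] at h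
      simpa [g, imW, sc, Algebra.smul_def, mul_assoc, Amul_neg, Aneg_mul, Aneg_neg, Aneg_inj, Asmul_neg] using h
  | Kme z w =>
      have h := wME σ hq z (σ.symm w)
      rw [Equiv.apply_symm_apply] at h
      simpa [g, imW, sc, Algebra.smul_def, mul_assoc, Amul_neg, Aneg_mul, Aneg_neg, Aneg_inj, Asmul_neg] using h
  | Kpf z w =>
      simpa [g, imW, sc, Algebra.smul_def, mul_assoc, Amul_neg, Aneg_mul, Aneg_neg, Aneg_inj, Asmul_neg] using
        wPF σ hq z w
  | Kmf z w =>
      simpa [g, imW, sc, Algebra.smul_def, mul_assoc, Amul_neg, Aneg_mul, Aneg_neg, Aneg_inj, Asmul_neg] using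
        wMF σ hq z w
  | ee z w =>
      have h := wEE σ hq (σ.symm z) (σ.symm w)
      rw [Equiv.apply_symm_apply, Equiv.apply_symm_apply] at h
      simpa [g, imW, sc, Algebra.smul_def, mul_assoc, Amul_neg, Aneg_mul, Aneg_inj,
        Aneg_neg, Asmul_neg] using h
  | ff z w =>
      simpa [g, imW, sc, Algebra.smul_def, mul_assoc, Amul_neg, Aneg_mul, Aneg_inj,
        Aneg_neg, Asmul_neg] using wFF σ hq z w
  | ef z w =>
      have h := wEF σ hq z w (σ.symm z) (Equiv.apply_symm_apply σ z)
      simpa [g, imW, sc, mul_assoc, Amul_neg, Aneg_mul, Aneg_neg, Aneg_inj, Asmul_neg,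
        apply_ite (FreeAlgebra.lift ℂ (imW σ q))] using h

lemma relV : ∀ ⦃x y⦄, DRel Z σ q x y →
    FreeAlgebra.lift ℂ (imV σ q) x = FreeAlgebra.lift ℂ (imV σ q) y := by
  intro x y h
  induction h with
  | KpKpi z =>
      simpa [g, imV] using bPiP σ q z
  | KpiKp z =>
      simpa [g, imV] using bPPi σ q z
  | KmKmi z =>
      simpa [g, imV] using bMiM σ q z
  | KmiKm z =>
      simpa [g, imV] using bMMi σ q z
  | KpKp z w =>
      simpa [g, imV] using dPiPi σ hq z w
  | KpKm z w =>
      simpa [g, imV, sc, Algebra.smul_def] using dPiMi σ hq z w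
  | KmKm z w =>
      simpa [g, imV, sc, Algebra.smul_def] using dMiMi σ hq z w
  | Kpe z w =>
      simpa [g, imV, sc, Algebra.smul_def, mul_assoc, Amul_neg, Aneg_mul, Aneg_neg, Aneg_inj, Asmul_neg] using
        vPE σ hq z w
  | Kme z w =>
      simpa [g, imV, sc, Algebra.smul_def, mul_assoc, Amul_neg, Aneg_mul, Aneg_neg, Aneg_inj, Asmul_neg] using
        vME σ hq z w
  | Kpf z w =>
      simpa [g, imV, sc, Algebra.smul_def, mul_assoc, Amul_neg, Aneg_mul, Aneg_neg, Aneg_inj, Asmul_neg] using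
        vPF σ hq z w
  | Kmf z w =>
      simpa [g, imV, sc, Algebra.smul_def, mul_assoc, Amul_neg, Aneg_mul, Aneg_neg, Aneg_inj, Asmul_neg] using
        vMF σ hq z w
  | ee z w =>
      simpa [g, imV, sc, Algebra.smul_def, mul_assoc, Amul_neg, Aneg_mul, Aneg_inj,
        Aneg_neg, Asmul_neg] using vEE σ hq z w
  | ff z w =>
      simpa [g, imV, sc, Algebra.smul_def, mul_assoc, Amul_neg, Aneg_mul, Aneg_inj,
        Aneg_neg, Asmul_neg] using vFF σ hq z w
  | ef z w =>
      simpa [g, imV, sc, mul_assoc, Amul_neg, Aneg_mul, Aneg_neg, Aneg_inj, Asmul_neg,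
        apply_ite (FreeAlgebra.lift ℂ (imV σ q))] using vEF σ hq z w

end Stmt18Aux
open Stmt18Aux in
theorem stmt18 (Z : Type*) [DecidableEq Z] (σ : Z ≃ Z) (q : Z → Z → ℂ)
    (hq : ∀ z w, q z w * q w z = 1) :
    ∃ φ : Adisc Z σ q →ₐ[ℂ] Adisc Z σ q,
      (∀ z, φ (gen σ q (Gen.e z))
        = -(gen σ q (Gen.Km (σ.symm z)) * gen σ q (Gen.f (σ.symm z)))) ∧
      (∀ z, φ (gen σ q (Gen.f z)) = -(gen σ q (Gen.e z) * gen σ q (Gen.Kpi z))) ∧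
      (∀ z, φ (gen σ q (Gen.Kp z)) = gen σ q (Gen.Kpi z)) ∧
      (∀ z, φ (gen σ q (Gen.Kpi z)) = gen σ q (Gen.Kp z)) ∧
      (∀ z, φ (gen σ q (Gen.Km z)) = gen σ q (Gen.Kmi z)) ∧
      (∀ z, φ (gen σ q (Gen.Kmi z)) = gen σ q (Gen.Km z)) ∧
      Function.Bijective φ := by
  let W : Adisc Z σ q →ₐ[ℂ] Adisc Z σ q :=
    RingQuot.liftAlgHom ℂ ⟨FreeAlgebra.lift ℂ (imW σ q), relW σ hq⟩
  let V : Adisc Z σ q →ₐ[ℂ] Adisc Z σ q :=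
    RingQuot.liftAlgHom ℂ ⟨FreeAlgebra.lift ℂ (imV σ q), relV σ hq⟩
  have hW : ∀ x : Gen Z, W (gen σ q x) = imW σ q x := fun x => by
    simp only [W, gen, g, RingQuot.liftAlgHom_mkAlgHom_apply, FreeAlgebra.lift_ι_apply]
  have hV : ∀ x : Gen Z, V (gen σ q x) = imV σ q x := fun x => by
    simp only [V, gen, g, RingQuot.liftAlgHom_mkAlgHom_apply, FreeAlgebra.lift_ι_apply]
  have hWe : ∀ z, W (GE σ q z) = -(GM σ q (σ.symm z) * GF σ q (σ.symm z)) :=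
    fun z => hW (Gen.e z)
  have hWf : ∀ z, W (GF σ q z) = -(GE σ q z * GPi σ q z) := fun z => hW (Gen.f z)
  have hWp : ∀ z, W (GP σ q z) = GPi σ q z := fun z => hW (Gen.Kp z)
  have hWpi : ∀ z, W (GPi σ q z) = GP σ q z := fun z => hW (Gen.Kpi z)
  have hWm : ∀ z, W (GM σ q z) = GMi σ q z := fun z => hW (Gen.Km z)
  have hWmi : ∀ z, W (GMi σ q z) = GM σ q z := fun z => hW (Gen.Kmi z)
  have hVe : ∀ z, V (GE σ q z) = -(GF σ q z * GPi σ q z) := fun z => hV (Gen.e z)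
  have hVf : ∀ z, V (GF σ q z) = -(GM σ q z * GE σ q (σ z)) := fun z => hV (Gen.f z)
  have hVp : ∀ z, V (GP σ q z) = GPi σ q z := fun z => hV (Gen.Kp z)
  have hVpi : ∀ z, V (GPi σ q z) = GP σ q z := fun z => hV (Gen.Kpi z)
  have hVm : ∀ z, V (GM σ q z) = GMi σ q z := fun z => hV (Gen.Km z)
  have hVmi : ∀ z, V (GMi σ q z) = GM σ q z := fun z => hV (Gen.Kmi z)
  have hWV : ∀ x : Gen Z, W (V (gen σ q x)) = gen σ q x := by
    intro x
    cases x with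
    | e z =>
        show W (V (GE σ q z)) = GE σ q z
        rw [hVe, map_neg, map_mul, hWf, hWpi, Aneg_mul, Aneg_neg, mul_assoc,
          bPiP, mul_one]
    | f z =>
        show W (V (GF σ q z)) = GF σ q z
        rw [hVf, map_neg, map_mul, hWm, hWe, Equiv.symm_apply_apply, Amul_neg,
          Aneg_neg, ← mul_assoc, bMiM, one_mul]
    | Kp z => show W (V (GP σ q z)) = GP σ q z; rw [hVp, hWpi]
    | Kpi z => show W (V (GPi σ q z)) = GPi σ q z; rw [hVpi, hWp]
    | Km z => show W (V (GM σ q z)) = GM σ q z; rw [hVm, hWmi]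
    | Kmi z => show W (V (GMi σ q z)) = GMi σ q z; rw [hVmi, hWm]
  have hVW : ∀ x : Gen Z, V (W (gen σ q x)) = gen σ q x := by
    intro x
    cases x with
    | e z =>
        show V (W (GE σ q z)) = GE σ q z
        rw [hWe, map_neg, map_mul, hVm, hVf, Amul_neg, Aneg_neg, ← mul_assoc,
          bMiM, one_mul, Equiv.apply_symm_apply]
    | f z =>
        show V (W (GF σ q z)) = GF σ q z
        rw [hWf, map_neg, map_mul, hVe, hVpi, Aneg_mul, Aneg_neg, mul_assoc,
          bPiP, mul_one]
    | Kp z => show V (W (GP σ q z)) = GP σ q z; rw [hWp, hVpi]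
    | Kpi z => show V (W (GPi σ q z)) = GPi σ q z; rw [hWpi, hVp]
    | Km z => show V (W (GM σ q z)) = GM σ q z; rw [hWm, hVmi]
    | Kmi z => show V (W (GMi σ q z)) = GMi σ q z; rw [hWmi, hVm]
  have hWVall : ∀ a, W (V a) = a := by
    have hcomp : (W.comp V).comp (RingQuot.mkAlgHom ℂ (DRel Z σ q))
        = (AlgHom.id ℂ (Adisc Z σ q)).comp (RingQuot.mkAlgHom ℂ (DRel Z σ q)) := by
      apply FreeAlgebra.hom_ext
      funext x
      simpa [gen, g] using hWV x
    intro a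
    obtain ⟨x, rfl⟩ := RingQuot.mkAlgHom_surjective ℂ (DRel Z σ q) a
    simpa using AlgHom.congr_fun hcomp x
  have hVWall : ∀ a, V (W a) = a := by
    have hcomp : (V.comp W).comp (RingQuot.mkAlgHom ℂ (DRel Z σ q))
        = (AlgHom.id ℂ (Adisc Z σ q)).comp (RingQuot.mkAlgHom ℂ (DRel Z σ q)) := by
      apply FreeAlgebra.hom_ext
      funext x
      simpa [gen, g] using hVW x
    intro a
    obtain ⟨x, rfl⟩ := RingQuot.mkAlgHom_surjective ℂ (DRel Z σ q) a
    simpa using AlgHom.congr_fun hcomp x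
  refine ⟨W, fun z => hW (Gen.e z), fun z => hW (Gen.f z), fun z => hW (Gen.Kp z),
    fun z => hW (Gen.Kpi z), fun z => hW (Gen.Km z), fun z => hW (Gen.Kmi z),
    Function.LeftInverse.injective hVWall, fun a => ⟨V a, hWVall a⟩⟩

end
end

section
/- Let Z be a set and q : Z² → ℂ^× with q(z,w)q(w,z) = 1, and consider A(Z, id, q) (the algebra of the previous statement with σ = id). Then the formulas Δ(K^±(z)) = K^±(z) ⊗ K^±(z), Δ(e(z)) = e(z) ⊗ K⁺(z) + 1 ⊗ e(z), Δ(f(z)) = f(z) ⊗ 1 + K⁻(z)^{−1} ⊗ f(z) extend to an algebra morphism Δ : A(Z,id,q) → A(Z,id,q) ⊗ A(Z,id,q). -/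
/- STATEMENT 19: For `σ = id`, the discrete algebra `A(Z,id,q)` carries a coproduct:
`Δ(K^±(z)) = K^±(z) ⊗ K^±(z)`, `Δ(e(z)) = e(z) ⊗ K⁺(z) + 1 ⊗ e(z)`,
`Δ(f(z)) = f(z) ⊗ 1 + K⁻(z)⁻¹ ⊗ f(z)` extend to an algebra morphism
`Δ : A(Z,id,q) → A(Z,id,q) ⊗ A(Z,id,q)`. -/

noncomputable section

open TensorProduct

set_option linter.unusedSectionVars false

namespace Stmt19Aux

variable {Z : Type*} [DecidableEq Z] (q : Z → Z → ℂ)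

/-- the quotient map -/
abbrev pi : FreeAlgebra ℂ (Gen Z) →ₐ[ℂ] Adisc Z (Equiv.refl Z) q :=
  RingQuot.mkAlgHom ℂ (DRel Z (Equiv.refl Z) q)

/-- short name for a generator image -/
abbrev G (x : Gen Z) : Adisc Z (Equiv.refl Z) q := gen (Equiv.refl Z) q x

lemma G_def (x : Gen Z) : G q x = pi q (g x) := rfl

lemma rel_eq {x y : FreeAlgebra ℂ (Gen Z)} (h : DRel Z (Equiv.refl Z) q x y) :
    pi q x = pi q y := RingQuot.mkAlgHom_rel ℂ h

section basic

lemma Kp_Kpi (z : Z) : G q (.Kp z) * G q (.Kpi z) = 1 := by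
  have h := rel_eq q (DRel.KpKpi (σ := Equiv.refl Z) z)
  simpa [G_def] using h

lemma Kpi_Kp (z : Z) : G q (.Kpi z) * G q (.Kp z) = 1 := by
  have h := rel_eq q (DRel.KpiKp (σ := Equiv.refl Z) z)
  simpa [G_def] using h

lemma Km_Kmi (z : Z) : G q (.Km z) * G q (.Kmi z) = 1 := by
  have h := rel_eq q (DRel.KmKmi (σ := Equiv.refl Z) z)
  simpa [G_def] using h

lemma Kmi_Km (z : Z) : G q (.Kmi z) * G q (.Km z) = 1 := by
  have h := rel_eq q (DRel.KmiKm (σ := Equiv.refl Z) z)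
  simpa [G_def] using h

lemma Kp_Kp (z w : Z) : G q (.Kp z) * G q (.Kp w) = G q (.Kp w) * G q (.Kp z) := by
  have h := rel_eq q (DRel.KpKp (σ := Equiv.refl Z) z w)
  simpa [G_def] using h

lemma qne (hq : ∀ z w, q z w * q w z = 1) (z w : Z) : q z w ≠ 0 := left_ne_zero_of_mul_eq_one (hq z w)

lemma qinv (hq : ∀ z w, q z w * q w z = 1) (z w : Z) : (q z w)⁻¹ = q w z := (eq_inv_of_mul_eq_one_left (by
  rw [mul_comm]; exact hq z w)).symm

lemma Kp_Km (hq : ∀ z w, q z w * q w z = 1) (z w : Z) : G q (.Kp z) * G q (.Km w) = G q (.Km w) * G q (.Kp z) := by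
  have h := rel_eq q (DRel.KpKm (σ := Equiv.refl Z) z w)
  simp only [sc, map_mul, AlgHom.commutes, Equiv.refl_apply,
    div_self (qne q hq z w), map_one, one_mul] at h
  simpa [G_def] using h

lemma Km_Km (hq : ∀ z w, q z w * q w z = 1) (z w : Z) : G q (.Km z) * G q (.Km w) = G q (.Km w) * G q (.Km z) := by
  have h := rel_eq q (DRel.KmKm (σ := Equiv.refl Z) z w)
  simp only [sc, map_mul, AlgHom.commutes, Equiv.refl_apply,
    div_self (qne q hq z w), map_one, one_mul] at h
  simpa [G_def] using h

lemma Kp_e (z w : Z) :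
    G q (.Kp z) * G q (.e w) = q z w • (G q (.e w) * G q (.Kp z)) := by
  have h := rel_eq q (DRel.Kpe (σ := Equiv.refl Z) z w)
  simp only [sc, map_mul, AlgHom.commutes, ← Algebra.smul_def] at h
  simpa [G_def] using h

lemma Km_e (z w : Z) :
    G q (.Km z) * G q (.e w) = q w z • (G q (.e w) * G q (.Km z)) := by
  have h := rel_eq q (DRel.Kme (σ := Equiv.refl Z) z w)
  simp only [sc, map_mul, AlgHom.commutes, Equiv.refl_apply, ← Algebra.smul_def] at h
  simpa [G_def] using h

lemma Kp_f (z w : Z) :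
    G q (.Kp z) * G q (.f w) = q w z • (G q (.f w) * G q (.Kp z)) := by
  have h := rel_eq q (DRel.Kpf (σ := Equiv.refl Z) z w)
  simp only [sc, map_mul, AlgHom.commutes, ← Algebra.smul_def] at h
  simpa [G_def] using h

lemma Km_f (z w : Z) :
    G q (.Km z) * G q (.f w) = q z w • (G q (.f w) * G q (.Km z)) := by
  have h := rel_eq q (DRel.Kmf (σ := Equiv.refl Z) z w)
  simp only [sc, map_mul, AlgHom.commutes, ← Algebra.smul_def] at h
  simpa [G_def] using h

lemma e_e (z w : Z) :
    G q (.e z) * G q (.e w) = q z w • (G q (.e w) * G q (.e z)) := by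
  have h := rel_eq q (DRel.ee (σ := Equiv.refl Z) z w)
  simp only [sc, map_mul, AlgHom.commutes, ← Algebra.smul_def] at h
  simpa [G_def] using h

lemma f_f (z w : Z) :
    G q (.f z) * G q (.f w) = q w z • (G q (.f w) * G q (.f z)) := by
  have h := rel_eq q (DRel.ff (σ := Equiv.refl Z) z w)
  simp only [sc, map_mul, AlgHom.commutes, ← Algebra.smul_def] at h
  simpa [G_def] using h

lemma e_f (z w : Z) :
    G q (.e z) * G q (.f w) = G q (.f w) * G q (.e z)
      + (if z = w then G q (.Kp z) else 0)
      - (if z = w then G q (.Kmi w) else 0) := by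
  have h := rel_eq q (DRel.ef (σ := Equiv.refl Z) z w)
  simp only [map_mul, map_add, map_sub, Equiv.refl_apply, apply_ite (pi q),
    map_zero] at h
  split_ifs at h ⊢ <;> simpa [G_def, *] using h

end basic

/-- commuting past an inverse -/
lemma inv_comm {R : Type*} [Ring R] [Algebra ℂ R] {u v x : R} {c : ℂ} (hc : c ≠ 0)
    (h1 : u * v = 1) (h2 : v * u = 1) (h : u * x = c • (x * u)) :
    v * x = c⁻¹ • (x * v) := by
  have hx : x * u = c⁻¹ • (u * x) := by
    rw [h, smul_smul, inv_mul_cancel₀ hc, one_smul]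
  calc v * x = v * (x * (u * v)) := by rw [h1, mul_one]
    _ = v * (x * u) * v := by noncomm_ring
    _ = c⁻¹ • (v * (u * x) * v) := by
        rw [hx, mul_smul_comm, smul_mul_assoc]
    _ = c⁻¹ • (x * v) := by rw [show v * (u * x) * v = (v * u) * (x * v) by noncomm_ring,
        h2, one_mul]

section derived

lemma Kmi_Kp (hq : ∀ z w, q z w * q w z = 1) (z w : Z) : G q (.Kmi w) * G q (.Kp z) = G q (.Kp z) * G q (.Kmi w) := by
  have h0 : G q (.Km w) * G q (.Kp z) = (1:ℂ) • (G q (.Kp z) * G q (.Km w)) := by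
    rw [one_smul]; exact (Kp_Km q hq z w).symm
  have h := inv_comm (one_ne_zero (α := ℂ)) (Km_Kmi q w) (Kmi_Km q w) h0
  simpa using h

lemma Kmi_Km' (hq : ∀ z w, q z w * q w z = 1) (z w : Z) : G q (.Kmi w) * G q (.Km z) = G q (.Km z) * G q (.Kmi w) := by
  have h0 : G q (.Km w) * G q (.Km z) = (1:ℂ) • (G q (.Km z) * G q (.Km w)) := by
    rw [one_smul]; exact (Km_Km q hq w z)
  have h := inv_comm (one_ne_zero (α := ℂ)) (Km_Kmi q w) (Kmi_Km q w) h0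
  simpa using h

lemma Kmi_Kmi (hq : ∀ z w, q z w * q w z = 1) (z w : Z) : G q (.Kmi z) * G q (.Kmi w) = G q (.Kmi w) * G q (.Kmi z) := by
  have h0 : G q (.Km w) * G q (.Kmi z) = (1:ℂ) • (G q (.Kmi z) * G q (.Km w)) := by
    rw [one_smul]; exact (Kmi_Km' q hq w z).symm
  have h := inv_comm (one_ne_zero (α := ℂ)) (Km_Kmi q w) (Kmi_Km q w) h0
  simpa using h.symm

lemma Kmi_e (hq : ∀ z w, q z w * q w z = 1) (z w : Z) :
    G q (.Kmi w) * G q (.e z) = q w z • (G q (.e z) * G q (.Kmi w)) := by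
  have h := inv_comm (qne q hq z w) (Km_Kmi q w) (Kmi_Km q w) (Km_e q w z)
  rwa [qinv q hq] at h

lemma Kmi_f (hq : ∀ z w, q z w * q w z = 1) (z w : Z) :
    G q (.Kmi z) * G q (.f w) = q w z • (G q (.f w) * G q (.Kmi z)) := by
  have h := inv_comm (qne q hq z w) (Km_Kmi q z) (Kmi_Km q z) (Km_f q z w)
  rwa [qinv q hq] at h

lemma e_Kmi (hq : ∀ z w, q z w * q w z = 1) (z w : Z) :
    G q (.e z) * G q (.Kmi w) = q z w • (G q (.Kmi w) * G q (.e z)) := by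
  rw [Kmi_e q hq z w, smul_smul, hq, one_smul]

lemma f_Kmi (hq : ∀ z w, q z w * q w z = 1) (z w : Z) :
    G q (.f w) * G q (.Kmi z) = q z w • (G q (.Kmi z) * G q (.f w)) := by
  rw [Kmi_f q hq z w, smul_smul, hq, one_smul]

lemma e_Kp (hq : ∀ z w, q z w * q w z = 1) (z w : Z) :
    G q (.e w) * G q (.Kp z) = q w z • (G q (.Kp z) * G q (.e w)) := by
  rw [Kp_e q z w, smul_smul, mul_comm, hq, one_smul]

lemma f_Kp (hq : ∀ z w, q z w * q w z = 1) (z w : Z) :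
    G q (.f w) * G q (.Kp z) = q z w • (G q (.Kp z) * G q (.f w)) := by
  rw [Kp_f q z w, smul_smul, mul_comm, hq, one_smul]

lemma e_Km (hq : ∀ z w, q z w * q w z = 1) (z w : Z) :
    G q (.e w) * G q (.Km z) = q z w • (G q (.Km z) * G q (.e w)) := by
  rw [Km_e q z w, smul_smul, mul_comm, hq, one_smul]

lemma f_Km (hq : ∀ z w, q z w * q w z = 1) (z w : Z) :
    G q (.f w) * G q (.Km z) = q w z • (G q (.Km z) * G q (.f w)) := by
  rw [Km_f q z w, smul_smul, mul_comm, hq, one_smul]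

end derived

/-- the images of the generators under the coproduct -/
def D : Gen Z → (Adisc Z (Equiv.refl Z) q ⊗[ℂ] Adisc Z (Equiv.refl Z) q)
  | .e z => G q (.e z) ⊗ₜ[ℂ] G q (.Kp z) + 1 ⊗ₜ[ℂ] G q (.e z)
  | .f z => G q (.f z) ⊗ₜ[ℂ] 1 + G q (.Kmi z) ⊗ₜ[ℂ] G q (.f z)
  | .Kp z => G q (.Kp z) ⊗ₜ[ℂ] G q (.Kp z)
  | .Kpi z => G q (.Kpi z) ⊗ₜ[ℂ] G q (.Kpi z)
  | .Km z => G q (.Km z) ⊗ₜ[ℂ] G q (.Km z)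
  | .Kmi z => G q (.Kmi z) ⊗ₜ[ℂ] G q (.Kmi z)

lemma compat (hq : ∀ z w, q z w * q w z = 1) ⦃x y : FreeAlgebra ℂ (Gen Z)⦄
    (h : DRel Z (Equiv.refl Z) q x y) :
    FreeAlgebra.lift ℂ (D q) x = FreeAlgebra.lift ℂ (D q) y := by
  induction h with
  | KpKpi z =>
      simp [g, D, Algebra.TensorProduct.tmul_mul_tmul, Kp_Kpi,
        ← Algebra.TensorProduct.one_def]
  | KpiKp z =>
      simp [g, D, Algebra.TensorProduct.tmul_mul_tmul, Kpi_Kp,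
        ← Algebra.TensorProduct.one_def]
  | KmKmi z =>
      simp [g, D, Algebra.TensorProduct.tmul_mul_tmul, Km_Kmi,
        ← Algebra.TensorProduct.one_def]
  | KmiKm z =>
      simp [g, D, Algebra.TensorProduct.tmul_mul_tmul, Kmi_Km,
        ← Algebra.TensorProduct.one_def]
  | KpKp z w =>
      simp only [g, map_mul, FreeAlgebra.lift_ι_apply, D,
        Algebra.TensorProduct.tmul_mul_tmul]
      rw [Kp_Kp q z w]
  | KpKm z w =>
      simp only [g, sc, map_mul, AlgHom.commutes, FreeAlgebra.lift_ι_apply, D,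
        Equiv.refl_apply, div_self (qne q hq z w), map_one, one_mul,
        Algebra.TensorProduct.tmul_mul_tmul]
      rw [Kp_Km q hq z w]
  | KmKm z w =>
      simp only [g, sc, map_mul, AlgHom.commutes, FreeAlgebra.lift_ι_apply, D,
        Equiv.refl_apply, div_self (qne q hq z w), map_one, one_mul,
        Algebra.TensorProduct.tmul_mul_tmul]
      rw [Km_Km q hq z w]
  | Kpe z w =>
      simp only [g, sc, map_mul, map_add, map_sub, map_zero, map_one,
        AlgHom.commutes, FreeAlgebra.lift_ι_apply, Equiv.refl_apply,
        apply_ite (FreeAlgebra.lift ℂ (D q)), map_smul, ← Algebra.smul_def]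
      simp only [D, mul_add, add_mul, smul_add, sub_mul, mul_sub,
        TensorProduct.add_tmul, TensorProduct.sub_tmul, TensorProduct.tmul_add,
        TensorProduct.tmul_sub, Algebra.TensorProduct.tmul_mul_tmul, one_mul, mul_one]
      rw [Kp_e q z w, Kp_Kp q z w]
      simp [smul_tmul', tmul_smul, smul_smul, smul_add, hq, sub_mul, mul_sub,
        TensorProduct.add_tmul, TensorProduct.sub_tmul, TensorProduct.tmul_add,
        TensorProduct.tmul_sub]
      try first | module | abel
  | Kme z w =>
      simp only [g, sc, map_mul, map_add, map_sub, map_zero, map_one,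
        AlgHom.commutes, FreeAlgebra.lift_ι_apply, Equiv.refl_apply,
        apply_ite (FreeAlgebra.lift ℂ (D q)), map_smul, ← Algebra.smul_def]
      simp only [D, mul_add, add_mul, smul_add, sub_mul, mul_sub,
        TensorProduct.add_tmul, TensorProduct.sub_tmul, TensorProduct.tmul_add,
        TensorProduct.tmul_sub, Algebra.TensorProduct.tmul_mul_tmul, one_mul, mul_one]
      rw [Km_e q z w, ← Kp_Km q hq w z]
      simp [smul_tmul', tmul_smul, smul_smul, smul_add, hq, sub_mul, mul_sub,
        TensorProduct.add_tmul, TensorProduct.sub_tmul, TensorProduct.tmul_add,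
        TensorProduct.tmul_sub]
      try first | module | abel
  | Kpf z w =>
      simp only [g, sc, map_mul, map_add, map_sub, map_zero, map_one,
        AlgHom.commutes, FreeAlgebra.lift_ι_apply, Equiv.refl_apply,
        apply_ite (FreeAlgebra.lift ℂ (D q)), map_smul, ← Algebra.smul_def]
      simp only [D, mul_add, add_mul, smul_add, sub_mul, mul_sub,
        TensorProduct.add_tmul, TensorProduct.sub_tmul, TensorProduct.tmul_add,
        TensorProduct.tmul_sub, Algebra.TensorProduct.tmul_mul_tmul, one_mul, mul_one]
      rw [Kp_f q z w, ← Kmi_Kp q hq z w]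
      simp [smul_tmul', tmul_smul, smul_smul, smul_add, hq, sub_mul, mul_sub,
        TensorProduct.add_tmul, TensorProduct.sub_tmul, TensorProduct.tmul_add,
        TensorProduct.tmul_sub]
      try first | module | abel
  | Kmf z w =>
      simp only [g, sc, map_mul, map_add, map_sub, map_zero, map_one,
        AlgHom.commutes, FreeAlgebra.lift_ι_apply, Equiv.refl_apply,
        apply_ite (FreeAlgebra.lift ℂ (D q)), map_smul, ← Algebra.smul_def]
      simp only [D, mul_add, add_mul, smul_add, sub_mul, mul_sub,
        TensorProduct.add_tmul, TensorProduct.sub_tmul, TensorProduct.tmul_add,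
        TensorProduct.tmul_sub, Algebra.TensorProduct.tmul_mul_tmul, one_mul, mul_one]
      rw [Km_f q z w, ← Kmi_Km' q hq z w]
      simp [smul_tmul', tmul_smul, smul_smul, smul_add, hq, sub_mul, mul_sub,
        TensorProduct.add_tmul, TensorProduct.sub_tmul, TensorProduct.tmul_add,
        TensorProduct.tmul_sub]
      try first | module | abel
  | ee z w =>
      simp only [g, sc, map_mul, map_add, map_sub, map_zero, map_one,
        AlgHom.commutes, FreeAlgebra.lift_ι_apply, Equiv.refl_apply,
        apply_ite (FreeAlgebra.lift ℂ (D q)), map_smul, ← Algebra.smul_def]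
      simp only [D, mul_add, add_mul, smul_add, sub_mul, mul_sub,
        TensorProduct.add_tmul, TensorProduct.sub_tmul, TensorProduct.tmul_add,
        TensorProduct.tmul_sub, Algebra.TensorProduct.tmul_mul_tmul, one_mul, mul_one]
      rw [e_e q z w, Kp_e q z w, Kp_e q w z, Kp_Kp q z w]
      simp [smul_tmul', tmul_smul, smul_smul, smul_add, hq, sub_mul, mul_sub,
        TensorProduct.add_tmul, TensorProduct.sub_tmul, TensorProduct.tmul_add,
        TensorProduct.tmul_sub]
      try first | module | abel
  | ff z w =>
      simp only [g, sc, map_mul, map_add, map_sub, map_zero, map_one,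
        AlgHom.commutes, FreeAlgebra.lift_ι_apply, Equiv.refl_apply,
        apply_ite (FreeAlgebra.lift ℂ (D q)), map_smul, ← Algebra.smul_def]
      simp only [D, mul_add, add_mul, smul_add, sub_mul, mul_sub,
        TensorProduct.add_tmul, TensorProduct.sub_tmul, TensorProduct.tmul_add,
        TensorProduct.tmul_sub, Algebra.TensorProduct.tmul_mul_tmul, one_mul, mul_one]
      rw [f_f q z w, f_Kmi q hq w z, f_Kmi q hq z w, Kmi_Kmi q hq z w]
      simp [smul_tmul', tmul_smul, smul_smul, smul_add, hq, sub_mul, mul_sub,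
        TensorProduct.add_tmul, TensorProduct.sub_tmul, TensorProduct.tmul_add,
        TensorProduct.tmul_sub]
      try first | module | abel
  | ef z w =>
      simp only [g, sc, map_mul, map_add, map_sub, map_zero, map_one,
        AlgHom.commutes, FreeAlgebra.lift_ι_apply, Equiv.refl_apply,
        apply_ite (FreeAlgebra.lift ℂ (D q)), map_smul, ← Algebra.smul_def]
      simp only [D, mul_add, add_mul, smul_add, sub_mul, mul_sub,
        TensorProduct.add_tmul, TensorProduct.sub_tmul, TensorProduct.tmul_add,
        TensorProduct.tmul_sub, Algebra.TensorProduct.tmul_mul_tmul, one_mul, mul_one]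
      rw [e_f q z w, e_Kmi q hq z w, Kp_f q z w]
      by_cases hzw : z = w
      · subst hzw
        simp only [if_pos rfl, eq_self_iff_true, if_true, TensorProduct.add_tmul,
          TensorProduct.sub_tmul, TensorProduct.tmul_add, TensorProduct.tmul_sub,
          smul_tmul', tmul_smul, smul_smul, hq, one_smul, FreeAlgebra.lift_ι_apply, D]
        abel
      · simp only [hzw, ↓reduceIte, map_zero, smul_zero, sub_zero, add_zero, TensorProduct.add_tmul,
          TensorProduct.sub_tmul, TensorProduct.tmul_add, TensorProduct.tmul_sub,
          smul_tmul', tmul_smul, smul_smul, hq, one_smul]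
        abel

end Stmt19Aux

theorem stmt19 (Z : Type*) [DecidableEq Z] (q : Z → Z → ℂ)
    (hq : ∀ z w, q z w * q w z = 1) :
    ∃ Δ : Adisc Z (Equiv.refl Z) q →ₐ[ℂ]
        (Adisc Z (Equiv.refl Z) q ⊗[ℂ] Adisc Z (Equiv.refl Z) q),
      (∀ z, Δ (gen (Equiv.refl Z) q (Gen.Kp z))
        = gen (Equiv.refl Z) q (Gen.Kp z) ⊗ₜ[ℂ] gen (Equiv.refl Z) q (Gen.Kp z)) ∧
      (∀ z, Δ (gen (Equiv.refl Z) q (Gen.Km z))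
        = gen (Equiv.refl Z) q (Gen.Km z) ⊗ₜ[ℂ] gen (Equiv.refl Z) q (Gen.Km z)) ∧
      (∀ z, Δ (gen (Equiv.refl Z) q (Gen.e z))
        = gen (Equiv.refl Z) q (Gen.e z) ⊗ₜ[ℂ] gen (Equiv.refl Z) q (Gen.Kp z)
          + 1 ⊗ₜ[ℂ] gen (Equiv.refl Z) q (Gen.e z)) ∧
      (∀ z, Δ (gen (Equiv.refl Z) q (Gen.f z))
        = gen (Equiv.refl Z) q (Gen.f z) ⊗ₜ[ℂ] 1
          + gen (Equiv.refl Z) q (Gen.Kmi z) ⊗ₜ[ℂ] gen (Equiv.refl Z) q (Gen.f z)) := by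
  refine ⟨RingQuot.liftAlgHom ℂ ⟨FreeAlgebra.lift ℂ (Stmt19Aux.D q),
    Stmt19Aux.compat q hq⟩, ?_, ?_, ?_, ?_⟩ <;>
  · intro z
    rw [gen, RingQuot.liftAlgHom_mkAlgHom_apply]
    simp [g, Stmt19Aux.D, Stmt19Aux.G, gen]

end
end
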